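/- There exists a unique z₀ > 0 such that H(z₀) = 0. -/

import Mathlib

noncomputable section

/-- The error function `erf x = (2/√π) ∫₀ˣ exp(−s²) ds`. -/
def erf (x : ℝ) : ℝ := (2 / Real.sqrt Real.pi) * ∫ s in (0:ℝ)..x, Real.exp (-(s^2))

/-- The complementary error function. -/
def erfc (x : ℝ) : ℝ := 1 - erf x

/-- Physical data of the three-phase Stefan problem: positive thermal conductivities,
specific heats, mass density, latent heats, and temperatures `B > C > D`. -/
structure Params where
  k₁ : ℝ
  k₂ : ℝ
  k₃ : ℝ
  c₁ : ℝ
  c₂ : ℝ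
  c₃ : ℝ
  ρ : ℝ
  ℓ₁ : ℝ
  ℓ₂ : ℝ
  B : ℝ
  C : ℝ
  D : ℝ
  hk₁ : 0 < k₁
  hk₂ : 0 < k₂
  hk₃ : 0 < k₃
  hc₁ : 0 < c₁
  hc₂ : 0 < c₂
  hc₃ : 0 < c₃
  hρ : 0 < ρ
  hℓ₁ : 0 < ℓ₁
  hℓ₂ : 0 < ℓ₂
  hBC : C < B
  hCD : D < C

namespace Params

/-- Thermal diffusivity of phase 1. -/
def α₁ (p : Params) : ℝ := p.k₁ / (p.ρ * p.c₁)

/-- Thermal diffusivity of phase 2. -/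
def α₂ (p : Params) : ℝ := p.k₂ / (p.ρ * p.c₂)

/-- Thermal diffusivity of phase 3. -/
def α₃ (p : Params) : ℝ := p.k₃ / (p.ρ * p.c₃)

/-- Stefan number `Ste₁ = c₁(C−D)/ℓ₁`. -/
def Ste₁ (p : Params) : ℝ := p.c₁ * (p.C - p.D) / p.ℓ₁

/-- Stefan number `Ste₂ = c₂(B−C)/ℓ₂`. -/
def Ste₂ (p : Params) : ℝ := p.c₂ * (p.B - p.C) / p.ℓ₂

/-- `φ(z) = z + (Ste₁/√π) exp(−z²)/erfc(z)`. -/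
def φ (p : Params) (z : ℝ) : ℝ :=
  z + (p.Ste₁ / Real.sqrt Real.pi) * Real.exp (-(z^2)) / erfc z

/-- `H(z) = erf(z√(α₁/α₂)) − (Ste₂/√π)(ℓ₂/ℓ₁)√(k₂c₁/(k₁c₂)) exp(−z²α₁/α₂)/φ(z)`. -/
def H (p : Params) (z : ℝ) : ℝ :=
  erf (z * Real.sqrt (p.α₁ / p.α₂)) -
    (p.Ste₂ / Real.sqrt Real.pi) * (p.ℓ₂ / p.ℓ₁) *
      Real.sqrt (p.k₂ * p.c₁ / (p.k₁ * p.c₂)) *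
      (Real.exp (-(z^2) * (p.α₁ / p.α₂)) / p.φ z)

/-- `Q(z) = (ℓ₁/ℓ₂) φ(z) exp(z² α₁/α₂)`. -/
def Q (p : Params) (z : ℝ) : ℝ :=
  (p.ℓ₁ / p.ℓ₂) * p.φ z * Real.exp (z^2 * (p.α₁ / p.α₂))

/-- The function `T` arising from the Robin (convective) boundary condition with
heat-transfer coefficient `h₀` and bulk temperature `Ainf`. -/
def T (p : Params) (h₀ Ainf : ℝ) (z : ℝ) : ℝ :=
  (p.Ste₂ / (Real.sqrt Real.pi * p.c₂)) * ((Ainf - p.B) / (p.B - p.C)) *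
    Real.sqrt (p.k₃ * p.c₁ * p.c₃ / p.k₁) *
    (Real.exp (-(z^2) * p.α₁ * (1 / p.α₃ - 1 / p.α₂)) /
      (p.k₃ / (h₀ * Real.sqrt (Real.pi * p.α₃)) + erf (z * Real.sqrt (p.α₁ / p.α₃)))) -
  z * Real.exp (z^2 * (p.α₁ / p.α₂))

/-- The function `V` arising from the Dirichlet boundary condition with temperature `A`. -/
def V (p : Params) (A : ℝ) (z : ℝ) : ℝ :=
  ((A - p.B) / p.ℓ₂) * Real.sqrt (p.c₁ * p.c₃ * p.k₃ / (Real.pi * p.k₁)) *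
    (Real.exp (-(z^2) * (p.α₁ / p.α₃ - p.α₁ / p.α₂)) / erf (z * Real.sqrt (p.α₁ / p.α₃))) -
  z * Real.exp (z^2 * (p.α₁ / p.α₂))

/-- The function `P` arising from the Neumann boundary condition with flux coefficient `q₀`. -/
def P (p : Params) (q₀ : ℝ) (z : ℝ) : ℝ :=
  Real.exp (z^2 * (p.α₁ / p.α₂)) *
    (-z + (q₀ / p.ℓ₂) * Real.sqrt (p.c₁ / (p.ρ * p.k₁)) * Real.exp (-(z^2) * (p.α₁ / p.α₃)))

/-- Critical heat-transfer coefficient `h₂`. -/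
def h2 (p : Params) (Ainf z₀ : ℝ) : ℝ :=
  ((p.B - p.C) / (Ainf - p.B)) *
    Real.sqrt (p.k₂ * p.k₃ * p.c₂ / (Real.pi * p.c₃ * p.α₃)) *
    (1 / erf (z₀ * Real.sqrt (p.α₁ / p.α₂)))

/-- Critical heat-flux coefficient `q₂`. -/
def q2 (p : Params) (z₀ : ℝ) : ℝ :=
  p.k₂ * (p.B - p.C) / (Real.sqrt (p.α₂ * Real.pi) * erf (z₀ * Real.sqrt (p.α₁ / p.α₂)))

end Params

/-!
`H` is continuous and strictly increasing on `[0, ∞)`, negative at `0` and tends to `1`, so it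
has exactly one positive zero. The delicate point is that `φ` is increasing, i.e. that
`g z = e^{-z²} / erfc z` is. Its derivative is `(2/√π) g (g - √π z)`, which is nonnegative by
the Gaussian tail bound `erfc z ≤ e^{-z²} / (√π z)` for `z > 0`.
-/

open Real MeasureTheory Set Filter Topology

lemma hasDerivAt_erf (x : ℝ) : HasDerivAt erf (2 / √π * exp (-(x ^ 2))) x := by
  have hcont : Continuous fun s : ℝ => exp (-(s ^ 2)) := by fun_prop
  exact (intervalIntegral.integral_hasDerivAt_right (hcont.intervalIntegrable _ _)
    (hcont.stronglyMeasurableAtFilter _ _) hcont.continuousAt).const_mul _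

lemma continuous_erf : Continuous erf :=
  continuous_iff_continuousAt.2 fun x => (hasDerivAt_erf x).continuousAt

lemma strictMono_erf : StrictMono erf :=
  strictMono_of_deriv_pos fun x => by rw [(hasDerivAt_erf x).deriv]; positivity

lemma erf_zero : erf 0 = 0 := by simp [erf]

lemma tendsto_erf_atTop : Tendsto erf atTop (𝓝 1) := by
  have hint : IntegrableOn (fun s : ℝ => exp (-(s ^ 2))) (Ioi 0) := by
    simpa using (integrable_exp_neg_mul_sq one_pos).integrableOn
  have hgauss : ∫ s in Ioi (0 : ℝ), exp (-(s ^ 2)) = √π / 2 := by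
    simpa using integral_gaussian_Ioi 1
  have h := (intervalIntegral_tendsto_integral_Ioi 0 hint tendsto_id).const_mul (2 / √π)
  have hone : 2 / √π * (√π / 2) = 1 := by field_simp
  rwa [hgauss, hone] at h

lemma erf_lt_one (x : ℝ) : erf x < 1 :=
  (strictMono_erf (lt_add_one x)).trans_le
    (strictMono_erf.monotone.ge_of_tendsto tendsto_erf_atTop _)

lemma erfc_pos (x : ℝ) : 0 < erfc x := sub_pos.2 (erf_lt_one x)

lemma hasDerivAt_erfc (x : ℝ) : HasDerivAt erfc (-(2 / √π * exp (-(x ^ 2)))) x :=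
  (hasDerivAt_erf x).const_sub 1

lemma tendsto_erfc_atTop : Tendsto erfc atTop (𝓝 0) := by
  have h := tendsto_erf_atTop.const_sub 1
  rwa [sub_self] at h

lemma tendsto_exp_neg_sq_mul_atTop {b : ℝ} (hb : 0 < b) :
    Tendsto (fun z => exp (-(z ^ 2) * b)) atTop (𝓝 0) := by
  refine tendsto_exp_comp_nhds_zero.2 ?_
  simpa [neg_mul] using (tendsto_pow_atTop two_ne_zero).atTop_mul_const hb

lemma hasDerivAt_exp_neg_sq (x : ℝ) :
    HasDerivAt (fun y => exp (-(y ^ 2))) (exp (-(x ^ 2)) * -(2 * x)) x := by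
  simpa using (hasDerivAt_pow 2 x).neg.exp

lemma erfc_le_exp_div {x : ℝ} (hx : 0 < x) : erfc x ≤ exp (-(x ^ 2)) / (√π * x) := by
  set F : ℝ → ℝ := fun y => exp (-(y ^ 2)) / (√π * y) - erfc y
  have hF' : ∀ y ∈ Ioi (0 : ℝ), HasDerivAt F (-(exp (-(y ^ 2)) / (√π * y ^ 2))) y := by
    intro y (hy : 0 < y)
    have hπ := (sqrt_pos.2 pi_pos).ne'
    have hden := ((hasDerivAt_id' y).const_mul √π).congr_deriv (mul_one √π)
    refine (((hasDerivAt_exp_neg_sq y).div hden (by positivity)).sub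
      (hasDerivAt_erfc y)).congr_deriv ?_
    field_simp
    ring
  have hanti : AntitoneOn F (Ioi 0) := by
    refine antitoneOn_of_deriv_nonpos (convex_Ioi 0)
      (fun y hy => (hF' y hy).continuousAt.continuousWithinAt)
      (fun y hy => (hF' y (interior_subset hy)).differentiableAt.differentiableWithinAt)
      fun y hy => ?_
    rw [(hF' y (interior_subset hy)).deriv, neg_nonpos]
    positivity
  have hlim : Tendsto F atTop (𝓝 0) := by
    have hnum : Tendsto (fun y => exp (-(y ^ 2))) atTop (𝓝 0) := by simp
    simpa using (hnum.div_atTop (tendsto_id.const_mul_atTop (sqrt_pos.2 pi_pos))).sub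
      tendsto_erfc_atTop
  have : 0 ≤ F x := le_of_tendsto hlim <| by
    filter_upwards [eventually_ge_atTop x] with y hy
    exact hanti hx (hx.trans_le hy) hy
  simpa [F, sub_nonneg] using this

/-- Up to the factor `2 / √π`, the inverse Mills ratio (density over tail) of the Gaussian
density `e^{-z²} / √π`. -/
def invMillsRatio (z : ℝ) : ℝ := exp (-(z ^ 2)) / erfc z

lemma invMillsRatio_pos (z : ℝ) : 0 < invMillsRatio z := div_pos (exp_pos _) (erfc_pos z)

lemma invMillsRatio_zero : invMillsRatio 0 = 1 := by simp [invMillsRatio, erfc, erf_zero]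

lemma sqrt_pi_mul_le_invMillsRatio (z : ℝ) : √π * z ≤ invMillsRatio z := by
  rcases le_or_gt z 0 with hz | hz
  · exact (mul_nonpos_of_nonneg_of_nonpos (sqrt_nonneg π) hz).trans (invMillsRatio_pos z).le
  · have := erfc_le_exp_div hz
    rw [le_div_iff₀ (by positivity)] at this
    rw [invMillsRatio, le_div_iff₀ (erfc_pos z)]
    linarith

lemma hasDerivAt_invMillsRatio (z : ℝ) :
    HasDerivAt invMillsRatio (2 / √π * invMillsRatio z * (invMillsRatio z - √π * z)) z := by
  refine ((hasDerivAt_exp_neg_sq z).div (hasDerivAt_erfc z) (erfc_pos z).ne').congr_deriv ?_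
  have := (erfc_pos z).ne'
  have := (sqrt_pos.2 pi_pos).ne'
  simp only [invMillsRatio]
  field_simp
  ring

lemma monotone_invMillsRatio : Monotone invMillsRatio :=
  monotone_of_deriv_nonneg (fun z => (hasDerivAt_invMillsRatio z).differentiableAt) fun z => by
    rw [(hasDerivAt_invMillsRatio z).deriv]
    have := invMillsRatio_pos z
    have := sub_nonneg.2 (sqrt_pi_mul_le_invMillsRatio z)
    positivity

lemma continuous_invMillsRatio : Continuous invMillsRatio :=
  continuous_iff_continuousAt.2 fun z => (hasDerivAt_invMillsRatio z).continuousAt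

lemma StrictMonoOn.existsUnique_gt_eq_zero {f : ℝ → ℝ} {a : ℝ} (hf : StrictMonoOn f (Ici a))
    (hfc : ContinuousOn f (Ici a)) (ha : f a < 0) (htop : ∀ᶠ x in atTop, 0 < f x) :
    ∃! x, a < x ∧ f x = 0 := by
  obtain ⟨c, hc, hac⟩ := (htop.and (eventually_ge_atTop a)).exists
  obtain ⟨x, ⟨hax, -⟩, hx⟩ := intermediate_value_Icc hac (hfc.mono Icc_subset_Ici_self)
    ⟨ha.le, hc.le⟩
  have hax' : a < x := hax.lt_of_ne <| by rintro rfl; exact ha.ne hx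
  exact ⟨x, ⟨hax', hx⟩, fun y ⟨hay, hy⟩ => hf.injOn hay.le hax'.le (hy.trans hx.symm)⟩

lemma MonotoneOn.pos_of_pos_left {ψ : ℝ → ℝ} {a : ℝ} (hψ : MonotoneOn ψ (Ici a)) (ha : 0 < ψ a)
    {z : ℝ} (hz : z ∈ Ici a) : 0 < ψ z :=
  ha.trans_le (hψ self_mem_Ici hz hz)

def stefanBalance (b K : ℝ) (ψ : ℝ → ℝ) (z : ℝ) : ℝ :=
  erf (z * √b) - K * (exp (-(z ^ 2) * b) / ψ z)

section stefanBalance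

variable {b K : ℝ} {ψ : ℝ → ℝ}

lemma stefanBalance_zero : stefanBalance b K ψ 0 = -(K / ψ 0) := by
  simp [stefanBalance, erf_zero, div_eq_mul_inv]

lemma strictMonoOn_stefanBalance (hb : 0 < b) (hK : 0 ≤ K) (hψ : MonotoneOn ψ (Ici 0))
    (hψ₀ : 0 < ψ 0) : StrictMonoOn (stefanBalance b K ψ) (Ici 0) := by
  intro x (hx : 0 ≤ x) y (hy : 0 ≤ y) hxy
  have herf : erf (x * √b) < erf (y * √b) :=
    strictMono_erf (mul_lt_mul_of_pos_right hxy (sqrt_pos.2 hb))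
  have hexp : exp (-(y ^ 2) * b) ≤ exp (-(x ^ 2) * b) :=
    exp_le_exp.2 (mul_le_mul_of_nonneg_right (neg_le_neg (by gcongr)) hb.le)
  have hquot : exp (-(y ^ 2) * b) / ψ y ≤ exp (-(x ^ 2) * b) / ψ x :=
    div_le_div₀ (exp_pos _).le hexp (hψ.pos_of_pos_left hψ₀ hx) (hψ hx hy hxy.le)
  unfold stefanBalance
  linarith [mul_le_mul_of_nonneg_left hquot hK]

lemma tendsto_stefanBalance_atTop (hb : 0 < b) (hψ : MonotoneOn ψ (Ici 0)) (hψ₀ : 0 < ψ 0) :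
    Tendsto (stefanBalance b K ψ) atTop (𝓝 1) := by
  have herf : Tendsto (fun z => erf (z * √b)) atTop (𝓝 1) :=
    tendsto_erf_atTop.comp (tendsto_id.atTop_mul_const (sqrt_pos.2 hb))
  have hexp := tendsto_exp_neg_sq_mul_atTop hb
  have hquot : Tendsto (fun z => exp (-(z ^ 2) * b) / ψ z) atTop (𝓝 0) := by
    have hbound := hexp.div_const (ψ 0)
    rw [zero_div] at hbound
    refine squeeze_zero' ?_ ?_ hbound
    · filter_upwards [eventually_ge_atTop 0] with z hz
      exact div_nonneg (exp_pos _).le (hψ.pos_of_pos_left hψ₀ hz).le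
    · filter_upwards [eventually_ge_atTop 0] with z (hz : 0 ≤ z)
      exact div_le_div_of_nonneg_left (exp_pos _).le hψ₀ (hψ self_mem_Ici hz hz)
  have h := herf.sub (hquot.const_mul K)
  rwa [mul_zero, sub_zero] at h

lemma continuousOn_stefanBalance (hψc : ContinuousOn ψ (Ici 0)) (hψ : MonotoneOn ψ (Ici 0))
    (hψ₀ : 0 < ψ 0) : ContinuousOn (stefanBalance b K ψ) (Ici 0) := by
  have hexp : Continuous fun z => exp (-(z ^ 2) * b) := by fun_prop
  exact (continuous_erf.comp (by fun_prop)).continuousOn.sub <| continuousOn_const.mul <|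
    hexp.continuousOn.div hψc fun z hz => (hψ.pos_of_pos_left hψ₀ hz).ne'

theorem existsUnique_pos_stefanBalance_eq_zero (hb : 0 < b) (hK : 0 < K)
    (hψc : ContinuousOn ψ (Ici 0)) (hψ : MonotoneOn ψ (Ici 0)) (hψ₀ : 0 < ψ 0) :
    ∃! z, 0 < z ∧ stefanBalance b K ψ z = 0 := by
  refine (strictMonoOn_stefanBalance hb hK.le hψ hψ₀).existsUnique_gt_eq_zero
    (continuousOn_stefanBalance hψc hψ hψ₀) ?_ ?_
  · rw [stefanBalance_zero, neg_lt_zero]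
    exact div_pos hK hψ₀
  · exact (tendsto_stefanBalance_atTop hb hψ hψ₀).eventually (eventually_gt_nhds one_pos)

end stefanBalance

namespace Params

variable (p : Params)

lemma α₁_pos : 0 < p.α₁ := div_pos p.hk₁ (mul_pos p.hρ p.hc₁)

lemma α₂_pos : 0 < p.α₂ := div_pos p.hk₂ (mul_pos p.hρ p.hc₂)

lemma Ste₁_pos : 0 < p.Ste₁ := div_pos (mul_pos p.hc₁ (sub_pos.2 p.hCD)) p.hℓ₁

lemma Ste₂_pos : 0 < p.Ste₂ := div_pos (mul_pos p.hc₂ (sub_pos.2 p.hBC)) p.hℓ₂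

lemma φ_eq : p.φ = fun z => z + p.Ste₁ / √π * invMillsRatio z := by
  funext z
  simp only [φ, invMillsRatio, mul_div_assoc]

lemma φ_zero_pos : 0 < p.φ 0 := by
  simp only [φ_eq, invMillsRatio_zero, zero_add, mul_one]
  exact div_pos p.Ste₁_pos (sqrt_pos.2 pi_pos)

lemma strictMono_φ : StrictMono p.φ := by
  rw [φ_eq]
  have := (div_pos p.Ste₁_pos (sqrt_pos.2 pi_pos)).le
  exact strictMono_id.add_monotone (monotone_invMillsRatio.const_mul this)

lemma continuous_φ : Continuous p.φ := by
  rw [φ_eq]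
  exact continuous_id.add (continuous_const.mul continuous_invMillsRatio)

end Params

/-- there exists a unique `z₀ > 0` with `H(z₀) = 0`. -/
theorem H_unique_positive_zero (p : Params) :
    ∃! z₀ : ℝ, 0 < z₀ ∧ p.H z₀ = 0 := by
  have hb : 0 < p.α₁ / p.α₂ := div_pos p.α₁_pos p.α₂_pos
  have hK : 0 < p.Ste₂ / √π * (p.ℓ₂ / p.ℓ₁) * √(p.k₂ * p.c₁ / (p.k₁ * p.c₂)) := by
    have := p.Ste₂_pos
    have := p.hℓ₁
    have := p.hℓ₂
    have := div_pos (mul_pos p.hk₂ p.hc₁) (mul_pos p.hk₁ p.hc₂)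
    positivity
  -- `p.H` is `stefanBalance (p.α₁ / p.α₂) K p.φ` by definition, with `K` the coefficient in `hK`.
  exact existsUnique_pos_stefanBalance_eq_zero hb hK p.continuous_φ.continuousOn
    (p.strictMono_φ.monotone.monotoneOn _) p.φ_zero_pos
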